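/- arXiv:1805.07172 — 3 statements merged into one kernel-verified Lean document; each statement's English description precedes it below -/
import Mathlib

section
/- Every involution in a finite Coxeter group can be written as a product of pairwise commuting reflections. -/
/-!
If `g ≠ 1` is an involution in `W`, some root `a` of `W` satisfies `g a = -a`: otherwise no
reflecting hyperplane contains the fixed space of `g`, so `g` fixes a regular vector `p`, and
only the identity of `W` fixes a regular vector. The reflection `r` in `a` commutes with `g`, and
`r * g` is an involution of `W` whose `(-1)`-eigenspace is that of `g` cut down by `aᗮ`; induction
on its dimension yields reflections with pairwise orthogonal roots.

That regular stabilizers are trivial is the classical argument with simple roots: a minimal set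
`D` of positive roots whose cone contains all positive roots has reflections that permute the
remaining positive roots, these reflections generate `W`, and a shortest word in them fixing `p`
could be shortened by the deletion argument.
-/

open scoped RealInnerProductSpace

/-- An (orthogonal) reflection of a real inner product space: an involution whose
`(-1)`-eigenspace is one-dimensional (i.e. it fixes a hyperplane pointwise). -/
def IsOrthoReflection {V : Type*} [NormedAddCommGroup V] [InnerProductSpace ℝ V]
    (g : V ≃ₗᵢ[ℝ] V) : Prop :=
  g ^ 2 = 1 ∧
    Module.finrank ℝ (Module.End.eigenspace (g.toLinearEquiv : V →ₗ[ℝ] V) (-1)) = 1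

namespace FiniteReflectionGroup

variable {V : Type*} [NormedAddCommGroup V] [InnerProductSpace ℝ V]

section Involution

variable {g : V ≃ₗᵢ[ℝ] V}

def negSpace (g : V ≃ₗᵢ[ℝ] V) : Submodule ℝ V :=
  Module.End.eigenspace (g.toLinearEquiv : V →ₗ[ℝ] V) (-1)

@[simp] lemma mem_negSpace {v : V} : v ∈ negSpace g ↔ g v = -v := by
  simp [negSpace]

lemma apply_apply_of_sq_eq_one (hg : g ^ 2 = 1) (v : V) : g (g v) = v := by
  simpa [sq] using congr($hg v)

lemma inner_apply_of_sq_eq_one (hg : g ^ 2 = 1) (x y : V) : ⟪g x, y⟫ = ⟪x, g y⟫ := by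
  rw [← g.inner_map_map x (g y), apply_apply_of_sq_eq_one hg]

lemma inner_eq_zero_of_apply_eq_self_of_apply_eq_neg {a v : V} (ha : g a = a) (hv : g v = -v) :
    ⟪a, v⟫ = 0 := by
  have := g.inner_map_map a v
  rw [ha, hv, inner_neg_right] at this
  linarith

lemma apply_eq_neg_of_forall_inner_eq_zero (hg : g ^ 2 = 1) {a : V}
    (h : ∀ x, g x = x → ⟪a, x⟫ = 0) : g a = -a := by
  have hfix : g (a + g a) = a + g a := by
    rw [map_add, apply_apply_of_sq_eq_one hg, add_comm]
  have hga : ⟪g a, a + g a⟫ = 0 := by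
    conv_lhs => rw [← hfix]
    rw [g.inner_map_map, h _ hfix]
  have : ⟪a + g a, a + g a⟫ = 0 := by rw [inner_add_left, h _ hfix, hga, add_zero]
  exact eq_neg_of_add_eq_zero_right (inner_self_eq_zero.mp this)

end Involution

-- Roots are normalised to unit length, so that a finite group has finitely many of them.
def IsReflection (r : V ≃ₗᵢ[ℝ] V) (a : V) : Prop :=
  ‖a‖ = 1 ∧ ∀ v, r v = v - (2 * ⟪a, v⟫) • a

namespace IsReflection

variable {r s : V ≃ₗᵢ[ℝ] V} {a b v : V}

lemma ne_zero (h : IsReflection r a) : a ≠ 0 :=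
  norm_ne_zero_iff.mp (h.1 ▸ one_ne_zero)

lemma inner_self (h : IsReflection r a) : ⟪a, a⟫ = 1 := by
  rw [real_inner_self_eq_norm_sq, h.1, one_pow]

lemma inner_self_ne_zero (h : IsReflection r a) : ⟪a, a⟫ ≠ 0 := by
  rw [h.inner_self]; exact one_ne_zero

lemma apply_self (h : IsReflection r a) : r a = -a := by
  rw [h.2, h.inner_self]; module

lemma apply_of_inner_eq_zero (h : IsReflection r a) (hv : ⟪a, v⟫ = 0) : r v = v := by
  rw [h.2, hv]; module

lemma apply_apply (h : IsReflection r a) (v : V) : r (r v) = v := by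
  rw [h.2 (r v), h.2 v, inner_sub_right, real_inner_smul_right, h.inner_self]; module

lemma mul_self (h : IsReflection r a) : r * r = 1 :=
  LinearIsometryEquiv.ext h.apply_apply

lemma sq_eq_one (h : IsReflection r a) : r ^ 2 = 1 := by rw [sq, h.mul_self]

lemma inv_eq (h : IsReflection r a) : r⁻¹ = r :=
  inv_eq_of_mul_eq_one_right h.mul_self

lemma neg (h : IsReflection r a) : IsReflection r (-a) :=
  ⟨by rw [norm_neg, h.1], fun v => by rw [h.2, inner_neg_left]; module⟩

lemma unique (hr : IsReflection r a) (hs : IsReflection s a) : r = s :=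
  LinearIsometryEquiv.ext fun v => by rw [hr.2, hs.2]

lemma conj (h : IsReflection r a) (w : V ≃ₗᵢ[ℝ] V) : IsReflection (w * r * w⁻¹) (w a) := by
  refine ⟨by rw [w.norm_map, h.1], fun v => ?_⟩
  obtain ⟨u, rfl⟩ := w.surjective v
  have hu : w⁻¹ (w u) = u := w.symm_apply_apply u
  simp only [LinearIsometryEquiv.coe_mul, Function.comp_apply, hu, h.2, map_sub, map_smul,
    LinearIsometryEquiv.inner_map_map]

lemma mem_span_of_apply_eq_neg (h : IsReflection r a) (hv : r v = -v) : v ∈ ℝ ∙ a := by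
  refine Submodule.mem_span_singleton.mpr ⟨⟪a, v⟫, ?_⟩
  have := h.2 v
  rw [hv] at this
  linear_combination (norm := module) (2⁻¹ : ℝ) • this

lemma negSpace_eq (h : IsReflection r a) : negSpace r = ℝ ∙ a := by
  refine le_antisymm (fun v hv => h.mem_span_of_apply_eq_neg (mem_negSpace.mp hv)) ?_
  rw [Submodule.span_singleton_le_iff_mem, mem_negSpace]
  exact h.apply_self

lemma isOrthoReflection (h : IsReflection r a) : IsOrthoReflection r :=
  ⟨h.sq_eq_one, by
    change Module.finrank ℝ (negSpace r) = 1
    rw [h.negSpace_eq, finrank_span_singleton h.ne_zero]⟩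

lemma eq_or_eq_neg (ha : IsReflection r a) (hb : IsReflection r b) : b = a ∨ b = -a := by
  obtain ⟨t, rfl⟩ := Submodule.mem_span_singleton.mp (ha.mem_span_of_apply_eq_neg hb.apply_self)
  have ht : |t| = 1 := by simpa [norm_smul, ha.1] using hb.1
  rcases abs_eq zero_le_one |>.mp ht with rfl | rfl
  · exact Or.inl (one_smul ℝ a)
  · exact Or.inr (neg_one_smul ℝ a)

lemma commute (hr : IsReflection r a) (hs : IsReflection s b) (hab : ⟪a, b⟫ = 0) :
    Commute r s := by
  refine LinearIsometryEquiv.ext fun v => ?_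
  have hba : ⟪b, a⟫ = 0 := by rw [real_inner_comm, hab]
  simp only [LinearIsometryEquiv.coe_mul, Function.comp_apply, hr.2, hs.2, inner_sub_right,
    real_inner_smul_right, hab, hba]
  module

lemma ne_of_inner_eq_zero (hr : IsReflection r a) (hs : IsReflection s b) (hab : ⟪a, b⟫ = 0) :
    r ≠ s := fun h => hr.inner_self_ne_zero <|
  inner_eq_zero_of_apply_eq_self_of_apply_eq_neg
    (hs.apply_of_inner_eq_zero (by rwa [real_inner_comm])) (h ▸ hr.apply_self)

end IsReflection

lemma exists_isReflection {r : V ≃ₗᵢ[ℝ] V} (h : IsOrthoReflection r) : ∃ a, IsReflection r a := by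
  obtain ⟨hsq, hrank⟩ := h
  change Module.finrank ℝ (negSpace r) = 1 at hrank
  have hbot : negSpace r ≠ ⊥ := by
    rintro hbot
    rw [hbot, finrank_bot] at hrank
    exact zero_ne_one hrank
  obtain ⟨v, hv, hv0⟩ := (Submodule.ne_bot_iff _).mp hbot
  set a := ‖v‖⁻¹ • v
  have ha : ‖a‖ = 1 := norm_smul_inv_norm hv0
  have haneg : a ∈ negSpace r := Submodule.smul_mem _ _ hv
  have hra : r a = -a := mem_negSpace.mp haneg
  have hspan := (finrank_eq_one_iff_of_nonzero' (⟨a, haneg⟩ : negSpace r)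
    (by simp [← norm_ne_zero_iff, ha])).mp hrank
  refine ⟨a, ha, fun u => ?_⟩
  have hu : u - r u ∈ negSpace r := by
    rw [mem_negSpace, map_sub, apply_apply_of_sq_eq_one hsq, neg_sub]
  obtain ⟨c, hc⟩ := hspan ⟨u - r u, hu⟩
  have hc : c • a = u - r u := congrArg Subtype.val hc
  have hinner : ⟪a, r u⟫ = -⟪a, u⟫ := by
    rw [← inner_apply_of_sq_eq_one hsq, hra, inner_neg_left]
  have hcu : c = 2 * ⟪a, u⟫ := by
    have := congrArg (⟪a, ·⟫) hc
    simp only [real_inner_smul_right, inner_sub_right, hinner, real_inner_self_eq_norm_sq,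
      ha] at this
    linarith
  rw [← hcu, hc]
  abel

section Cone

variable {s : Set V} {v x : V}

lemma inner_nonneg_of_mem_hull (hs : ∀ d ∈ s, 0 ≤ ⟪d, v⟫) (hx : x ∈ PointedCone.hull ℝ s) :
    0 ≤ ⟪x, v⟫ := by
  induction hx using Submodule.span_induction with
  | mem d hd => exact hs d hd
  | zero => simp
  | add x y _ _ hx hy => rw [inner_add_left]; linarith
  | smul c x _ hx =>
    rw [← Nonneg.coe_smul, real_inner_smul_left]
    exact mul_nonneg c.2 hx

lemma eq_zero_or_inner_pos_of_mem_hull (hs : ∀ d ∈ s, 0 < ⟪d, v⟫)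
    (hx : x ∈ PointedCone.hull ℝ s) : x = 0 ∨ 0 < ⟪x, v⟫ := by
  induction hx using Submodule.span_induction with
  | mem d hd => exact Or.inr (hs d hd)
  | zero => exact Or.inl rfl
  | add x y _ _ hx hy =>
    rcases hx with rfl | hx
    · rwa [zero_add]
    rcases hy with rfl | hy
    · rw [add_zero]; exact Or.inr hx
    · rw [inner_add_left]; exact Or.inr (by linarith)
  | smul c x _ hx =>
    rw [← Nonneg.coe_smul, real_inner_smul_left]
    rcases hx with rfl | hx
    · exact Or.inl (smul_zero _)
    rcases c.2.eq_or_lt with hc | hc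
    · exact Or.inl (by rw [← hc, zero_smul])
    · exact Or.inr (mul_pos hc hx)

lemma exists_eq_smul_add_of_mem_hull {α : V} (hα : α ∈ s) (hx : x ∈ PointedCone.hull ℝ s) :
    ∃ c : {c : ℝ // 0 ≤ c}, ∃ x' ∈ PointedCone.hull ℝ (s \ {α}), x = c • α + x' := by
  rwa [← Set.insert_eq_of_mem hα, ← Set.insert_sdiff_singleton, Submodule.mem_span_insert] at hx

lemma eq_zero_of_mem_hull_of_neg_mem_hull (hs : ∀ d ∈ s, 0 < ⟪d, v⟫)
    (hx : x ∈ PointedCone.hull ℝ s) (hnx : -x ∈ PointedCone.hull ℝ s) : x = 0 := by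
  rcases eq_zero_or_inner_pos_of_mem_hull hs hx with h | h
  · exact h
  rcases eq_zero_or_inner_pos_of_mem_hull hs hnx with h' | h'
  · exact neg_eq_zero.mp h'
  · rw [inner_neg_left] at h'; linarith

end Cone

def IsRoot (W : Subgroup (V ≃ₗᵢ[ℝ] V)) (a : V) : Prop :=
  ∃ r ∈ W, IsReflection r a

section Roots

variable {W : Subgroup (V ≃ₗᵢ[ℝ] V)} {a : V}

lemma IsRoot.neg (h : IsRoot W a) : IsRoot W (-a) :=
  let ⟨r, hr, hra⟩ := h; ⟨r, hr, hra.neg⟩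

lemma IsRoot.map (h : IsRoot W a) {w : V ≃ₗᵢ[ℝ] V} (hw : w ∈ W) : IsRoot W (w a) :=
  let ⟨r, hr, hra⟩ := h
  ⟨w * r * w⁻¹, mul_mem (mul_mem hw hr) (inv_mem hw), hra.conj w⟩

lemma setOf_isRoot_finite (hW : Finite W) : {a | IsRoot W a}.Finite := by
  have hroots : ∀ r : V ≃ₗᵢ[ℝ] V, {a | IsReflection r a}.Finite := fun r => by
    rcases Set.eq_empty_or_nonempty {a | IsReflection r a} with h | ⟨b, hb⟩
    · rw [h]; exact Set.finite_empty
    · refine (Set.toFinite {b, -b}).subset fun a ha => ?_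
      rcases hb.eq_or_eq_neg ha with rfl | rfl <;> simp
  refine ((W : Set (V ≃ₗᵢ[ℝ] V)).toFinite.biUnion fun r _ => hroots r).subset ?_
  rintro a ⟨r, hr, hra⟩
  exact Set.mem_biUnion hr hra

def IsRegular (W : Subgroup (V ≃ₗᵢ[ℝ] V)) (p : V) : Prop :=
  ∀ a, IsRoot W a → ⟪a, p⟫ ≠ 0

def positiveRoots (W : Subgroup (V ≃ₗᵢ[ℝ] V)) (p : V) : Set V :=
  {a | IsRoot W a ∧ 0 < ⟪a, p⟫}

variable {p : V}

lemma IsRegular.mem_positiveRoots_or_neg_mem (hp : IsRegular W p) (ha : IsRoot W a) :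
    a ∈ positiveRoots W p ∨ -a ∈ positiveRoots W p := by
  rcases (hp a ha).lt_or_gt with h | h
  · exact Or.inr ⟨ha.neg, by rw [inner_neg_left]; linarith⟩
  · exact Or.inl ⟨ha, h⟩

end Roots

-- Minimality of `D` replaces the linear independence of simple roots in the usual definition.
structure IsSimpleSystem (W : Subgroup (V ≃ₗᵢ[ℝ] V)) (p : V) (D : Finset V) : Prop where
  subset_positiveRoots : (D : Set V) ⊆ positiveRoots W p
  positiveRoots_subset_hull : positiveRoots W p ⊆ PointedCone.hull ℝ (D : Set V)
  notMem_hull_diff : ∀ β ∈ D, β ∉ PointedCone.hull ℝ ((D : Set V) \ {β})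

lemma exists_isSimpleSystem {W : Subgroup (V ≃ₗᵢ[ℝ] V)} (hW : Finite W) (p : V) :
    ∃ D, IsSimpleSystem W p D := by
  classical
  suffices h : ∀ T : Finset V, (T : Set V) ⊆ positiveRoots W p →
      positiveRoots W p ⊆ PointedCone.hull ℝ (T : Set V) → ∃ D, IsSimpleSystem W p D by
    have hfin : (positiveRoots W p).Finite :=
      (setOf_isRoot_finite hW).subset fun a ha => ha.1
    exact h hfin.toFinset (by simp) (by simp)
  intro T
  induction T using Finset.strongInduction with
  | H T ih =>
    intro hT hThull
    by_cases hmin : ∃ β ∈ T, β ∈ PointedCone.hull ℝ ((T : Set V) \ {β})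
    swap
    · exact ⟨T, hT, hThull, fun β hβ h => hmin ⟨β, hβ, h⟩⟩
    obtain ⟨β, hβ, hβhull⟩ := hmin
    refine ih _ (Finset.erase_ssubset hβ) ((Finset.coe_erase β T ▸ Set.sdiff_subset).trans hT) ?_
    rw [Finset.coe_erase]
    refine hThull.trans (Submodule.span_le.mpr fun d hd => ?_)
    by_cases hdβ : d = β
    · exact hdβ ▸ hβhull
    · exact PointedCone.subset_hull ⟨hd, hdβ⟩

def simpleReflections (D : Finset V) : Set (V ≃ₗᵢ[ℝ] V) :=
  {r | ∃ δ ∈ D, IsReflection r δ}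

lemma inv_simpleReflections_subset (D : Finset V) :
    (simpleReflections D)⁻¹ ⊆ simpleReflections D := by
  rintro r ⟨δ, hδ, h⟩
  have hr : r⁻¹ = r := by simpa using h.inv_eq.symm
  exact ⟨δ, hδ, hr ▸ h⟩

namespace IsSimpleSystem

variable {W : Subgroup (V ≃ₗᵢ[ℝ] V)} {p : V} {D : Finset V} (hD : IsSimpleSystem W p D)
include hD

lemma inner_pos {δ : V} (hδ : δ ∈ D) : 0 < ⟪δ, p⟫ := (hD.subset_positiveRoots hδ).2

lemma mem_of_isReflection {δ : V} {r : V ≃ₗᵢ[ℝ] V} (hδ : δ ∈ D) (hr : IsReflection r δ) :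
    r ∈ W := by
  obtain ⟨r', hr'W, hr'⟩ := (hD.subset_positiveRoots hδ).1
  exact hr.unique hr' ▸ hr'W

lemma simpleReflections_subset : simpleReflections D ⊆ W := fun _ ⟨_, hδ, hr⟩ =>
  hD.mem_of_isReflection hδ hr

lemma eq_zero_of_smul_eq {α z : V} {t : ℝ} (hα : α ∈ D)
    (hz : z ∈ PointedCone.hull ℝ ((D : Set V) \ {α})) (h : t • α = z) : z = 0 := by
  rcases eq_zero_or_inner_pos_of_mem_hull (fun d hd => hD.inner_pos hd.1) hz with h0 | hzp
  · exact h0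
  exfalso
  rcases le_or_gt t 0 with ht | ht
  · rw [← h, real_inner_smul_left] at hzp
    nlinarith [hD.inner_pos hα]
  · refine hD.notMem_hull_diff α hα ?_
    have := Submodule.smul_mem _ (⟨t⁻¹, inv_nonneg.mpr ht.le⟩ : {c : ℝ // 0 ≤ c}) hz
    rwa [Nonneg.mk_smul, ← h, smul_smul, inv_mul_cancel₀ ht.ne', one_smul] at this

lemma apply_mem_positiveRoots (hp : IsRegular W p) {α β : V} {r : V ≃ₗᵢ[ℝ] V} (hα : α ∈ D)
    (hr : IsReflection r α) (hβ : β ∈ positiveRoots W p) (hne : β ≠ α) :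
    r β ∈ positiveRoots W p := by
  -- Otherwise `β` and `-(r β)` are positive roots adding up to a multiple of `α`, so by minimality
  -- of `D` their components off `α` cancel and `β` is a positive multiple of `α`.
  refine (hp.mem_positiveRoots_or_neg_mem (hβ.1.map (hD.mem_of_isReflection hα hr))).resolve_right
    fun hneg => hne ?_
  obtain ⟨b, β', hβ', hβeq⟩ :=
    exists_eq_smul_add_of_mem_hull (Finset.mem_coe.mpr hα) (hD.positiveRoots_subset_hull hβ)
  obtain ⟨c, γ', hγ', hγeq⟩ :=
    exists_eq_smul_add_of_mem_hull (Finset.mem_coe.mpr hα) (hD.positiveRoots_subset_hull hneg)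
  rw [← Nonneg.coe_smul] at hβeq hγeq
  have hsum : (2 * ⟪α, β⟫ - b - c) • α = β' + γ' := by
    rw [hr.2] at hγeq
    linear_combination (norm := module) hγeq + hβeq
  have hβ'0 : β' = 0 := by
    refine eq_zero_of_mem_hull_of_neg_mem_hull (fun d hd => hD.inner_pos hd.1) hβ' ?_
    rwa [neg_eq_of_add_eq_zero_right (hD.eq_zero_of_smul_eq hα (add_mem hβ' hγ') hsum)]
  obtain ⟨_, _, hβr⟩ := hβ.1
  obtain ⟨_, _, hαr⟩ := (hD.subset_positiveRoots hα).1
  rw [hβ'0, add_zero] at hβeq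
  have hb : (b : ℝ) = 1 := by
    have := hβr.1
    rwa [hβeq, norm_smul, hαr.1, mul_one, Real.norm_of_nonneg b.2] at this
  rw [hβeq, hb, one_smul]

lemma mem_closure_of_isReflection (hW : Finite W) (hp : IsRegular W p) {β : V}
    {r : V ≃ₗᵢ[ℝ] V} (hβ : β ∈ positiveRoots W p) (hr : IsReflection r β) :
    r ∈ Subgroup.closure (simpleReflections D) := by
  set bad := {β ∈ positiveRoots W p |
    ∃ r, IsReflection r β ∧ r ∉ Subgroup.closure (simpleReflections D)}
  have hbad : bad.Finite := (setOf_isRoot_finite hW).subset fun a ha => ha.1.1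
  -- Induction on the height `⟪β, p⟫`: reflecting in a simple root `δ` with `0 < ⟪δ, β⟫` lowers it.
  by_contra hrc
  obtain ⟨β, ⟨hβ, r, hr, hrc⟩, hmin⟩ := Set.exists_min_image bad (⟪·, p⟫) hbad ⟨β, hβ, r, hr, hrc⟩
  obtain ⟨δ, hδ, hδβ⟩ : ∃ δ ∈ D, 0 < ⟪δ, β⟫ := by
    by_contra! h
    have := inner_nonneg_of_mem_hull (v := -β)
      (fun d hd => by rw [inner_neg_right]; linarith [h d hd]) (hD.positiveRoots_subset_hull hβ)
    rw [inner_neg_right, real_inner_self_eq_norm_sq] at this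
    obtain ⟨_, _, hβr⟩ := hβ.1
    rw [hβr.1] at this
    norm_num at this
  obtain ⟨s, -, hs⟩ := (hD.subset_positiveRoots hδ).1
  have hsimple : s ∈ Subgroup.closure (simpleReflections D) :=
    Subgroup.subset_closure ⟨δ, hδ, hs⟩
  have hγ : s β ∈ positiveRoots W p :=
    hD.apply_mem_positiveRoots hp hδ hs hβ fun h => hrc (Subgroup.subset_closure ⟨δ, hδ, h ▸ hr⟩)
  have hlt : ⟪s β, p⟫ < ⟪β, p⟫ := by
    rw [hs.2, inner_sub_left, real_inner_smul_left]
    nlinarith [hD.inner_pos hδ]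
  have hconj : s * r * s⁻¹ ∈ Subgroup.closure (simpleReflections D) := by
    by_contra h
    exact hlt.not_ge (hmin _ ⟨hγ, _, hr.conj s, h⟩)
  refine hrc ?_
  have : r = s⁻¹ * (s * r * s⁻¹) * s := by group
  rw [this]
  exact mul_mem (mul_mem (inv_mem hsimple) hconj) hsimple

lemma le_closure_simpleReflections (hW : Finite W) (hp : IsRegular W p)
    {S : Set (V ≃ₗᵢ[ℝ] V)} (hS : ∀ s ∈ S, ∃ a, IsReflection s a)
    (hgen : Subgroup.closure S = W) : W ≤ Subgroup.closure (simpleReflections D) := by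
  rw [← hgen, Subgroup.closure_le]
  intro s hs
  obtain ⟨a, ha⟩ := hS s hs
  have hroot : IsRoot W a := ⟨s, hgen ▸ Subgroup.subset_closure hs, ha⟩
  rcases hp.mem_positiveRoots_or_neg_mem hroot with h | h
  · exact hD.mem_closure_of_isReflection hW hp h ha
  · exact hD.mem_closure_of_isReflection hW hp h ha.neg

/-- The deletion argument: the letter `y` of `l` at which the image of `α` turns negative is the
reflection in the image `β` of `α` under the letters to its right (`y` maps only its own root
among positive roots to a negative one), so `y` cancels against `s`. -/
lemma exists_length_lt_prod_eq_mul (hp : IsRegular W p) {α : V} {s : V ≃ₗᵢ[ℝ] V} (hα : α ∈ D)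
    (hs : IsReflection s α) (l : List (V ≃ₗᵢ[ℝ] V)) (hl : ∀ y ∈ l, y ∈ simpleReflections D)
    (hneg : ⟪l.prod α, p⟫ < 0) :
    ∃ l' : List (V ≃ₗᵢ[ℝ] V), (∀ y ∈ l', y ∈ simpleReflections D) ∧ l'.length < l.length ∧
      l'.prod = l.prod * s := by
  induction l with
  | nil => exact absurd (hD.inner_pos hα) (by simpa using hneg.le.not_gt)
  | cons y m ih =>
    have hm : ∀ y ∈ m, y ∈ simpleReflections D := fun y' hy' => hl y' (List.mem_cons_of_mem _ hy')
    have hroot : IsRoot W (m.prod α) := (hD.subset_positiveRoots hα).1.map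
      (list_prod_mem fun y' hy' => hD.simpleReflections_subset (hm y' hy'))
    rw [List.prod_cons, LinearIsometryEquiv.coe_mul, Function.comp_apply] at hneg
    rcases hp.mem_positiveRoots_or_neg_mem hroot with hpos | hnegm
    · obtain ⟨δ, hδ, hy⟩ := hl y List.mem_cons_self
      have hδeq : m.prod α = δ := by
        by_contra hne
        exact hneg.not_gt (hD.apply_mem_positiveRoots hp hδ hy hpos hne).2
      have hy' : y = m.prod * s * m.prod⁻¹ := hy.unique (hδeq ▸ hs.conj m.prod)
      refine ⟨m, hm, by simp, ?_⟩
      rw [List.prod_cons, hy', inv_mul_cancel_right, mul_assoc, hs.mul_self, mul_one]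
    · have := hnegm.2
      rw [inner_neg_left] at this
      obtain ⟨l', hl', hlen, hprod⟩ := ih hm (by linarith)
      refine ⟨y :: l', List.forall_mem_cons.mpr ⟨hl y List.mem_cons_self, hl'⟩,
        by simpa using hlen, ?_⟩
      rw [List.prod_cons, List.prod_cons, hprod, mul_assoc]

lemma prod_eq_one_of_prod_apply_eq (hp : IsRegular W p) (l : List (V ≃ₗᵢ[ℝ] V))
    (hl : ∀ y ∈ l, y ∈ simpleReflections D) (h : l.prod p = p) : l.prod = 1 := by
  induction hlen : l.length using Nat.strong_induction_on generalizing l with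
  | _ n ih =>
  rcases l.eq_nil_or_concat with rfl | ⟨m, t, rfl⟩
  · rfl
  rw [List.concat_eq_append] at *
  obtain ⟨δ, hδ, ht⟩ := hl t (by simp)
  have hprod : (m ++ [t]).prod = m.prod * t := by simp
  rw [hprod] at h ⊢
  have hneg : ⟪m.prod δ, p⟫ < 0 := by
    have hδ' : m.prod δ = -(m.prod * t) δ := by
      rw [LinearIsometryEquiv.coe_mul, Function.comp_apply, ht.apply_self, map_neg, neg_neg]
    have hinv : ⟪(m.prod * t) δ, p⟫ = ⟪δ, p⟫ := by
      conv_lhs => rw [← h]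
      exact LinearIsometryEquiv.inner_map_map _ _ _
    rw [hδ', inner_neg_left, hinv]
    linarith [hD.inner_pos hδ]
  obtain ⟨l', hl', hlen', hprod'⟩ :=
    hD.exists_length_lt_prod_eq_mul hp hδ ht m (fun y hy => hl y (List.mem_append_left _ hy)) hneg
  rw [← hprod'] at h ⊢
  exact ih _ (by simp at hlen; omega) l' hl' h rfl

lemma eq_one_of_apply_eq (hW : Finite W) (hp : IsRegular W p) {S : Set (V ≃ₗᵢ[ℝ] V)}
    (hS : ∀ s ∈ S, ∃ a, IsReflection s a) (hgen : Subgroup.closure S = W)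
    {w : V ≃ₗᵢ[ℝ] V} (hw : w ∈ W) (hwp : w p = p) : w = 1 := by
  have hcl := hD.le_closure_simpleReflections hW hp hS hgen hw
  rw [← Subgroup.mem_toSubmonoid, Subgroup.closure_toSubmonoid,
    Set.union_eq_self_of_subset_right (inv_simpleReflections_subset D)] at hcl
  obtain ⟨l, hl, rfl⟩ := Submonoid.exists_list_of_mem_closure hcl
  exact hD.prod_eq_one_of_prod_apply_eq hp l hl hwp

end IsSimpleSystem

variable {W : Subgroup (V ≃ₗᵢ[ℝ] V)} {S : Set (V ≃ₗᵢ[ℝ] V)}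

lemma exists_isRoot_apply_eq_neg (hW : Finite W) (hS : ∀ s ∈ S, ∃ a, IsReflection s a)
    (hgen : Subgroup.closure S = W) {g : V ≃ₗᵢ[ℝ] V} (hgW : g ∈ W) (hg : g ^ 2 = 1)
    (hne : g ≠ 1) : ∃ a, IsRoot W a ∧ g a = -a := by
  -- Otherwise no root is orthogonal to the fixed space of `g`, so `g` fixes a regular vector.
  by_contra! h
  have : Finite {a // IsRoot W a} := (setOf_isRoot_finite hW).to_subtype
  obtain ⟨p, hpfix, hp⟩ := Module.Dual.exists_forall_mem_ne_zero_of_forall_exists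
    (Module.End.eigenspace (g.toLinearEquiv : V →ₗ[ℝ] V) 1)
    (fun a : {a // IsRoot W a} => innerₛₗ ℝ a.1) fun a => by
      by_contra! h0
      refine h a a.2 (apply_eq_neg_of_forall_inner_eq_zero hg fun x hx => h0 x ?_)
      simpa [Module.End.mem_eigenspace_iff] using hx
  have hgp : g p = p := by simpa [Module.End.mem_eigenspace_iff] using hpfix
  obtain ⟨D, hD⟩ := exists_isSimpleSystem hW p
  exact hne (hD.eq_one_of_apply_eq hW (fun a ha => hp ⟨a, ha⟩) hS hgen hgW hgp)

section ReflectionTimesInvolution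

variable {g r : V ≃ₗᵢ[ℝ] V} {a v : V}

lemma commute_of_apply_eq_neg (hr : IsReflection r a) (hga : g a = -a) : Commute g r := by
  have hconj : IsReflection (g * r * g⁻¹) a := by
    simpa [hga] using (hr.conj g).neg
  exact mul_inv_eq_iff_eq_mul.mp (hconj.unique hr)

lemma mul_apply_eq_self (hr : IsReflection r a) (hga : g a = -a) : (r * g) a = a := by
  rw [LinearIsometryEquiv.coe_mul, Function.comp_apply, hga, map_neg, hr.apply_self, neg_neg]

lemma inner_eq_zero_of_mul_apply_eq_neg (hr : IsReflection r a) (hga : g a = -a)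
    (hv : (r * g) v = -v) : ⟪a, v⟫ = 0 :=
  inner_eq_zero_of_apply_eq_self_of_apply_eq_neg (mul_apply_eq_self hr hga) hv

lemma apply_eq_neg_of_mul_apply_eq_neg (hr : IsReflection r a) (hga : g a = -a)
    (hv : (r * g) v = -v) : g v = -v :=
  calc g v = r ((r * g) v) := (hr.apply_apply (g v)).symm
    _ = -v := by
      rw [hv, map_neg, hr.apply_of_inner_eq_zero (inner_eq_zero_of_mul_apply_eq_neg hr hga hv)]

lemma negSpace_mul_lt (hr : IsReflection r a) (hga : g a = -a) :
    negSpace (r * g) < negSpace g := by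
  refine SetLike.lt_iff_le_and_exists.mpr ⟨fun v hv => ?_, a, mem_negSpace.mpr hga, fun ha => ?_⟩
  · exact mem_negSpace.mpr (apply_eq_neg_of_mul_apply_eq_neg hr hga (mem_negSpace.mp hv))
  · exact hr.inner_self_ne_zero (inner_eq_zero_of_mul_apply_eq_neg hr hga (mem_negSpace.mp ha))

end ReflectionTimesInvolution

lemma exists_commuting_reflections [FiniteDimensional ℝ V] (hW : Finite W)
    (hS : ∀ s ∈ S, ∃ a, IsReflection s a) (hgen : Subgroup.closure S = W) {g : V ≃ₗᵢ[ℝ] V}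
    (hgW : g ∈ W) (hg : g ^ 2 = 1) :
    ∃ l : List (V ≃ₗᵢ[ℝ] V), (∀ s ∈ l, s ∈ W ∧ ∃ b, IsReflection s b ∧ g b = -b) ∧
      l.Pairwise (fun a b => Commute a b ∧ a ≠ b) ∧ l.prod = g := by
  induction hn : Module.finrank ℝ (negSpace g) using Nat.strong_induction_on generalizing g with
  | _ n ih =>
  by_cases hg1 : g = 1
  · exact ⟨[], by simp, List.Pairwise.nil, by simp [hg1]⟩
  obtain ⟨a, ⟨r, hrW, hr⟩, hga⟩ := exists_isRoot_apply_eq_neg hW hS hgen hgW hg hg1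
  have hrg : (r * g) ^ 2 = 1 := by
    rw [(commute_of_apply_eq_neg hr hga).symm.mul_pow, hr.sq_eq_one, hg, one_mul]
  obtain ⟨l, hl, hpw, hprod⟩ := ih _ (hn ▸ Submodule.finrank_lt_finrank_of_lt
    (negSpace_mul_lt hr hga)) (mul_mem hrW hgW) hrg rfl
  refine ⟨r :: l, List.forall_mem_cons.mpr ⟨⟨hrW, a, hr, hga⟩, fun s hs => ?_⟩,
    List.pairwise_cons.mpr ⟨fun s hs => ?_, hpw⟩, ?_⟩
  · obtain ⟨hsW, b, hb, hb'⟩ := hl s hs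
    exact ⟨hsW, b, hb, apply_eq_neg_of_mul_apply_eq_neg hr hga hb'⟩
  · obtain ⟨-, b, hb, hb'⟩ := hl s hs
    have hab := inner_eq_zero_of_mul_apply_eq_neg hr hga hb'
    exact ⟨hr.commute hb hab, hr.ne_of_inner_eq_zero hb hab⟩
  · rw [List.prod_cons, hprod, ← mul_assoc, hr.mul_self, one_mul]

end FiniteReflectionGroup

/-- Every involution in a finite Coxeter group (realized via its geometric representation
as a finite group of orthogonal transformations generated by reflections) can be written
as a product of pairwise commuting reflections of the group. -/
theorem involution_eq_prod_commuting_reflections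
    {V : Type*} [NormedAddCommGroup V] [InnerProductSpace ℝ V] [FiniteDimensional ℝ V]
    (W : Subgroup (V ≃ₗᵢ[ℝ] V)) (hfin : Finite W)
    (S : Set (V ≃ₗᵢ[ℝ] V)) (hS : ∀ s ∈ S, IsOrthoReflection s)
    (hgen : Subgroup.closure S = W)
    (g : V ≃ₗᵢ[ℝ] V) (hgW : g ∈ W) (hg : g ^ 2 = 1) :
    ∃ l : List (V ≃ₗᵢ[ℝ] V),
      (∀ s ∈ l, IsOrthoReflection s ∧ s ∈ W) ∧
      l.Pairwise (fun a b => Commute a b ∧ a ≠ b) ∧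
      l.prod = g := by
  obtain ⟨l, hl, hpw, hprod⟩ := FiniteReflectionGroup.exists_commuting_reflections hfin
    (fun s hs => FiniteReflectionGroup.exists_isReflection (hS s hs)) hgen hgW hg
  refine ⟨l, fun s hs => ?_, hpw, hprod⟩
  obtain ⟨hsW, b, hb, -⟩ := hl s hs
  exact ⟨hb.isOrthoReflection, hsW⟩
end

section
/- If g is an involution in a finite Coxeter group written as a product of n pairwise commuting reflections, then n equals the multiplicity of -1 as an eigenvalue of g in the geometric representation. -/
/-- The degree of an involution: the multiplicity of `-1` as an eigenvalue,
i.e. the dimension of the `(-1)`-eigenspace. -/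
noncomputable def invDegree {V : Type*} [NormedAddCommGroup V] [InnerProductSpace ℝ V]
    (g : V ≃ₗᵢ[ℝ] V) : ℕ :=
  Module.finrank ℝ (Module.End.eigenspace (g.toLinearEquiv : V →ₗ[ℝ] V) (-1))

/-!
The `(-1)`-eigenspace of an isometric involution is orthogonal to its fixed space, and an
involution is determined by its `(-1)`-eigenspace. Two distinct commuting reflections therefore
fix each other's `(-1)`-lines, so these lines are pairwise orthogonal. Each line is negated by the
product `g` (one factor negates it, the others fix it), and `g` fixes the orthogonal complement
of their sum; hence the `(-1)`-eigenspace of `g` is the orthogonal sum of the `n` lines.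
-/

open Module Submodule

section

variable {V : Type*} [NormedAddCommGroup V] [InnerProductSpace ℝ V]

noncomputable def negSpace (g : V ≃ₗᵢ[ℝ] V) : Submodule ℝ V :=
  Module.End.eigenspace (g.toLinearEquiv : V →ₗ[ℝ] V) (-1)

theorem mem_negSpace_iff {g : V ≃ₗᵢ[ℝ] V} {x : V} : x ∈ negSpace g ↔ g x = -x := by
  simp [negSpace]

theorem apply_apply_of_sq_eq_one {g : V ≃ₗᵢ[ℝ] V} (hg : g ^ 2 = 1) (x : V) : g (g x) = x := by
  simpa [pow_two] using DFunLike.congr_fun hg x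

theorem IsOrthoReflection.finrank_negSpace {r : V ≃ₗᵢ[ℝ] V} (hr : IsOrthoReflection r) :
    finrank ℝ (negSpace r) = 1 :=
  hr.2

theorem inner_eq_zero_of_apply_eq_neg_of_apply_eq_self {g : V ≃ₗᵢ[ℝ] V} {x y : V}
    (hx : g x = -x) (hy : g y = y) : inner ℝ x y = 0 := by
  have h : inner ℝ x y = -inner ℝ x y := by
    conv_lhs => rw [← g.inner_map_map x y, hx, hy, inner_neg_left]
  linarith

theorem apply_eq_self_of_mem_orthogonal_negSpace {g : V ≃ₗᵢ[ℝ] V} (hg : g ^ 2 = 1) {x : V}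
    (hx : x ∈ (negSpace g)ᗮ) : g x = x := by
  set b := x - g x
  have hb : g b = -b := by simp [b, apply_apply_of_sq_eq_one hg]
  have hbx : inner ℝ b x = 0 := inner_right_of_mem_orthogonal (mem_negSpace_iff.2 hb) hx
  have hbgx : inner ℝ b (g x) = 0 := by
    rw [← g.inner_map_map, hb, apply_apply_of_sq_eq_one hg, inner_neg_left, hbx, neg_zero]
  have hbb : inner ℝ b b = 0 := by
    simp only [b, inner_sub_right] at hbx hbgx ⊢
    rw [hbx, hbgx, sub_zero]
  exact (sub_eq_zero.1 (inner_self_eq_zero.1 hbb)).symm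

theorem list_prod_apply_eq_self {l : List (V ≃ₗᵢ[ℝ] V)} {v : V} (h : ∀ s ∈ l, s v = v) :
    l.prod v = v := by
  induction l with
  | nil => rfl
  | cons s t ih =>
    rw [List.prod_cons, LinearIsometryEquiv.coe_mul, Function.comp_apply,
      ih fun r hr => h r (List.mem_cons_of_mem s hr), h s List.mem_cons_self]

theorem list_prod_apply_eq_neg {l : List (V ≃ₗᵢ[ℝ] V)} (hnd : l.Nodup) {r : V ≃ₗᵢ[ℝ] V}
    (hr : r ∈ l) {v : V} (hv : r v = -v) (hfix : ∀ s ∈ l, s ≠ r → s v = v) : l.prod v = -v := by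
  obtain ⟨l₁, l₂, rfl⟩ := List.append_of_mem hr
  have hr' : r ∉ l₁ ++ l₂ := (List.nodup_cons.1 (List.nodup_middle.1 hnd)).1
  have hfix' : ∀ s ∈ l₁ ++ l₂, s v = v := fun s hs =>
    hfix s (List.mem_append.2 ((List.mem_append.1 hs).imp id (List.mem_cons_of_mem r)))
      (fun h => hr' (h ▸ hs))
  rw [List.prod_append, List.prod_cons, LinearIsometryEquiv.coe_mul, LinearIsometryEquiv.coe_mul,
    Function.comp_apply, Function.comp_apply,
    list_prod_apply_eq_self fun s hs => hfix' s (List.mem_append_right l₁ hs), hv, map_neg,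
    list_prod_apply_eq_self fun s hs => hfix' s (List.mem_append_left l₂ hs)]

variable [FiniteDimensional ℝ V]

theorem eq_of_negSpace_eq {r s : V ≃ₗᵢ[ℝ] V} (hr : r ^ 2 = 1) (hs : s ^ 2 = 1)
    (h : negSpace r = negSpace s) : r = s := by
  ext x
  obtain ⟨y, hy, z, hz, rfl⟩ := (negSpace r).exists_add_mem_mem_orthogonal x
  have hy' : y ∈ negSpace s := h ▸ hy
  have hz' : z ∈ (negSpace s)ᗮ := h ▸ hz
  rw [map_add, map_add, mem_negSpace_iff.1 hy, mem_negSpace_iff.1 hy',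
    apply_eq_self_of_mem_orthogonal_negSpace hr hz, apply_eq_self_of_mem_orthogonal_negSpace hs hz']

theorem IsOrthoReflection.negSpace_eq_span_singleton {r : V ≃ₗᵢ[ℝ] V} (hr : IsOrthoReflection r)
    {v : V} (hv : v ∈ negSpace r) (hv0 : v ≠ 0) : negSpace r = ℝ ∙ v :=
  (eq_of_le_of_finrank_le ((span_singleton_le_iff_mem v _).2 hv)
    (by rw [finrank_span_singleton hv0]; exact hr.finrank_negSpace.le)).symm

theorem IsOrthoReflection.apply_eq_self_of_commute {r s : V ≃ₗᵢ[ℝ] V} (hr : IsOrthoReflection r)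
    (hs : IsOrthoReflection s) (hne : r ≠ s) (hc : Commute r s) {v : V} (hv : v ∈ negSpace s) :
    r v = v := by
  by_contra hrv
  -- `v - r v` would be a common `(-1)`-eigenvector, forcing the two lines to coincide.
  set w := v - r v
  have hw0 : w ≠ 0 := sub_ne_zero.2 (Ne.symm hrv)
  have hwr : w ∈ negSpace r := mem_negSpace_iff.2 (by simp [w, apply_apply_of_sq_eq_one hr.1])
  have hsr : s (r v) = r (s v) := by simpa using DFunLike.congr_fun hc.eq.symm v
  have hws : w ∈ negSpace s := mem_negSpace_iff.2 (by
    simp only [w, map_sub, hsr, mem_negSpace_iff.1 hv, map_neg]; abel)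
  exact hne (eq_of_negSpace_eq hr.1 hs.1 <| by
    rw [hr.negSpace_eq_span_singleton hwr hw0, hs.negSpace_eq_span_singleton hws hw0])

theorem IsOrthoReflection.isOrtho_negSpace_of_commute {r s : V ≃ₗᵢ[ℝ] V}
    (hr : IsOrthoReflection r) (hs : IsOrthoReflection s) (hne : r ≠ s) (hc : Commute r s) :
    negSpace r ⟂ negSpace s :=
  isOrtho_iff_inner_eq.2 fun _ hu _ hv => inner_eq_zero_of_apply_eq_neg_of_apply_eq_self
    (mem_negSpace_iff.1 hu) (hr.apply_eq_self_of_commute hs hne hc hv)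

theorem finrank_iSup_mem_list_of_pairwise_isOrtho {ι : Type*} (f : ι → Submodule ℝ V)
    {l : List ι} (hl : l.Pairwise fun i j => f i ⟂ f j) :
    finrank ℝ ↥(⨆ i ∈ l, f i) = (l.map fun i => finrank ℝ (f i)).sum := by
  induction l with
  | nil => simp
  | cons i t ih =>
    obtain ⟨hi, ht⟩ := List.pairwise_cons.1 hl
    have hdisj : f i ⊓ ⨆ j ∈ t, f j = ⊥ :=
      disjoint_iff.1 (isOrtho_iSup_right.2 fun j => isOrtho_iSup_right.2 (hi j)).disjoint
    have hsup : ⨆ j ∈ i :: t, f j = f i ⊔ ⨆ j ∈ t, f j := by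
      simp only [List.mem_cons, iSup_or, iSup_sup_eq, iSup_iSup_eq_left]
    have := finrank_sup_add_finrank_inf_eq (f i) (⨆ j ∈ t, f j)
    rw [hdisj, finrank_bot, add_zero, ih ht] at this
    rw [hsup, this, List.map_cons, List.sum_cons]

theorem negSpace_list_prod_eq_iSup {l : List (V ≃ₗᵢ[ℝ] V)} (hl : ∀ r ∈ l, IsOrthoReflection r)
    (hcomm : l.Pairwise Commute) (hnd : l.Nodup) : negSpace l.prod = ⨆ r ∈ l, negSpace r := by
  set K := ⨆ r ∈ l, negSpace r
  refine le_antisymm ?_ (iSup₂_le fun r hr v hv => ?_)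
  · have hfix : ∀ x ∈ Kᗮ, l.prod x = x := fun x hx => list_prod_apply_eq_self fun r hr =>
      apply_eq_self_of_mem_orthogonal_negSpace (hl r hr).1 (orthogonal_le (le_iSup₂ r hr) hx)
    intro v hv
    rw [← K.orthogonal_orthogonal, mem_orthogonal]
    intro x hx
    rw [real_inner_comm]
    exact inner_eq_zero_of_apply_eq_neg_of_apply_eq_self (mem_negSpace_iff.1 hv) (hfix x hx)
  · exact mem_negSpace_iff.2 <| list_prod_apply_eq_neg hnd hr (mem_negSpace_iff.1 hv)
      fun s hs hsr => (hl s hs).apply_eq_self_of_commute (hl r hr) hsr (hcomm.forall hs hr hsr) hv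

theorem finrank_negSpace_list_prod {l : List (V ≃ₗᵢ[ℝ] V)} (hl : ∀ r ∈ l, IsOrthoReflection r)
    (hcomm : l.Pairwise Commute) (hnd : l.Nodup) : finrank ℝ (negSpace l.prod) = l.length := by
  have horth : l.Pairwise fun r s => negSpace r ⟂ negSpace s :=
    (hcomm.and hnd).imp_of_mem fun hr hs h =>
      (hl _ hr).isOrtho_negSpace_of_commute (hl _ hs) h.2 h.1
  rw [negSpace_list_prod_eq_iSup hl hcomm hnd, finrank_iSup_mem_list_of_pairwise_isOrtho _ horth,
    List.map_congr_left (g := fun _ => 1) fun r hr => (hl r hr).finrank_negSpace]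
  simp

end

theorem length_eq_neg_one_eigenvalue_multiplicity_general
    {V : Type*} [NormedAddCommGroup V] [InnerProductSpace ℝ V] [FiniteDimensional ℝ V]
    (W : Subgroup (V ≃ₗᵢ[ℝ] V))
    (g : V ≃ₗᵢ[ℝ] V)
    (n : ℕ) (l : List (V ≃ₗᵢ[ℝ] V)) (hlen : l.length = n)
    (hrefl : ∀ s ∈ l, IsOrthoReflection s ∧ s ∈ W)
    (hcomm : l.Pairwise Commute) (hnd : l.Nodup)
    (hprod : l.prod = g) :
    invDegree g = n := by
  subst hlen hprod
  exact finrank_negSpace_list_prod (fun s hs => (hrefl s hs).1) hcomm hnd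

/-- If an involution `g` of a finite Coxeter group (realized geometrically as a finite
orthogonal reflection group) is written as a product of `n` pairwise commuting distinct
reflections, then `n` is the multiplicity of `-1` as an eigenvalue of `g`. -/
theorem length_eq_neg_one_eigenvalue_multiplicity
    {V : Type*} [NormedAddCommGroup V] [InnerProductSpace ℝ V] [FiniteDimensional ℝ V]
    (W : Subgroup (V ≃ₗᵢ[ℝ] V)) (hfin : Finite W)
    (S : Set (V ≃ₗᵢ[ℝ] V)) (hS : ∀ s ∈ S, IsOrthoReflection s)
    (hgen : Subgroup.closure S = W)
    (g : V ≃ₗᵢ[ℝ] V) (hgW : g ∈ W) (hg : g ^ 2 = 1)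
    (n : ℕ) (l : List (V ≃ₗᵢ[ℝ] V)) (hlen : l.length = n)
    (hrefl : ∀ s ∈ l, IsOrthoReflection s ∧ s ∈ W)
    (hcomm : l.Pairwise Commute) (hnd : l.Nodup)
    (hprod : l.prod = g) :
    invDegree g = n :=
  length_eq_neg_one_eigenvalue_multiplicity_general W g n l hlen hrefl hcomm hnd hprod
end

section
/- Any two maximal sets of pairwise commuting reflections generating the same elementary abelian 2-subgroup C of a finite Coxeter group W determine the same subgroup, and the product of the reflections in such a set is the unique involution in C of maximal degree. -/
/-!
Write `s_S` for the product of the reflections `s i`, `i ∈ S`; as the `s i` are commuting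
involutions, every element of the cube is some `s_S`. For `j ≠ i`, `s_j` commutes with `s_i` and
so preserves its `(-1)`-eigenline `ℝ v_i`, while it moves every vector only along `v_j`; by linear
independence, `s_j` fixes `v_i`. Hence `s_S` negates the roots `v_i`, `i ∈ S`, and moves every
vector only within `span {v_i | i ∈ S}`, so its `(-1)`-eigenspace is exactly that span, of
dimension `|S|`.
-/

open Module Submodule

section CommutingFamily

variable {G ι : Type*} [Group G] {s : ι → G} (hcomm : ∀ i j, Commute (s i) (s j))

def commProd (S : Finset ι) : G :=
  S.noncommProd s (Pairwise.set_pairwise (fun i j _ => hcomm i j) _)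

lemma commProd_empty : commProd hcomm ∅ = 1 :=
  Finset.noncommProd_empty _ _

variable [DecidableEq ι]

lemma commProd_insert {j : ι} {S : Finset ι} (hj : j ∉ S) :
    commProd hcomm (insert j S) = s j * commProd hcomm S :=
  Finset.noncommProd_insert_of_notMem _ _ _ _ hj

lemma mul_commProd_erase {j : ι} {S : Finset ι} (hj : j ∈ S) :
    s j * commProd hcomm (S.erase j) = commProd hcomm S :=
  Finset.mul_noncommProd_erase _ hj _ _

lemma exists_commProd_eq_of_mem_closure (hinv : ∀ i, s i ^ 2 = 1) {x : G}
    (hx : x ∈ Subgroup.closure (Set.range s)) : ∃ S, commProd hcomm S = x := by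
  have mul_left : ∀ i S, ∃ T, commProd hcomm T = s i * commProd hcomm S := by
    intro i S
    by_cases hi : i ∈ S
    · refine ⟨S.erase i, ?_⟩
      rw [← mul_commProd_erase hcomm hi, ← mul_assoc, ← sq, hinv, one_mul]
    · exact ⟨insert i S, commProd_insert hcomm hi⟩
  induction hx using Subgroup.closure_induction_left with
  | one => exact ⟨∅, commProd_empty hcomm⟩
  | mul_left _ hy _ _ ih =>
    obtain ⟨i, rfl⟩ := hy
    obtain ⟨S, rfl⟩ := ih
    exact mul_left i S
  | inv_mul_cancel _ hy _ _ ih =>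
    obtain ⟨i, rfl⟩ := hy
    obtain ⟨S, rfl⟩ := ih
    rw [inv_eq_of_mul_eq_one_right (by rw [← sq, hinv i])]
    exact mul_left i S

end CommutingFamily

lemma List.prod_ofFn_eq_commProd {G : Type*} [Group G] {n : ℕ} {s : Fin n → G}
    (hcomm : ∀ i j, Commute (s i) (s j)) :
    (List.ofFn s).prod = commProd hcomm Finset.univ := by
  rw [List.ofFn_eq_map]
  unfold commProd Finset.noncommProd
  rw [Fin.univ_def]
  simp only [Multiset.map_coe]
  rw [Multiset.noncommProd_coe]

section Reflections

variable {V : Type*} [NormedAddCommGroup V] [InnerProductSpace ℝ V]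

namespace LinearIsometryEquiv

abbrev negEigenspace (g : V ≃ₗᵢ[ℝ] V) : Submodule ℝ V :=
  End.eigenspace (g.toLinearEquiv : V →ₗ[ℝ] V) (-1)

lemma mem_negEigenspace {g : V ≃ₗᵢ[ℝ] V} {x : V} : x ∈ g.negEigenspace ↔ g x = -x := by
  rw [End.mem_eigenspace_iff, neg_one_smul]; rfl

lemma apply_sub_self_mem_negEigenspace {g : V ≃ₗᵢ[ℝ] V} (hg : g ^ 2 = 1) (x : V) :
    g x - x ∈ g.negEigenspace := by
  have hgg : g (g x) = x := congr($hg x)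
  rw [mem_negEigenspace, map_sub, hgg, neg_sub]

end LinearIsometryEquiv

open LinearIsometryEquiv

namespace IsOrthoReflection

variable {g : V ≃ₗᵢ[ℝ] V} {v : V}

lemma negEigenspace_eq_span (hg : IsOrthoReflection g) (hv0 : v ≠ 0)
    (hv : v ∈ g.negEigenspace) : g.negEigenspace = span ℝ {v} := by
  have : FiniteDimensional ℝ g.negEigenspace := Module.finite_of_finrank_pos (by
    rw [hg.2]; exact one_pos)
  refine (eq_of_le_of_finrank_le ((span_singleton_le_iff_mem _ _).2 hv) ?_).symm
  rw [hg.2, finrank_span_singleton hv0]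

lemma apply_sub_self_mem_span (hg : IsOrthoReflection g) (hv0 : v ≠ 0)
    (hv : v ∈ g.negEigenspace) (x : V) : g x - x ∈ span ℝ {v} :=
  hg.negEigenspace_eq_span hv0 hv ▸ apply_sub_self_mem_negEigenspace hg.1 x

lemma apply_eq_self_of_commute_s13 {h : V ≃ₗᵢ[ℝ] V} {w : V} (hg : IsOrthoReflection g)
    (hh : IsOrthoReflection h) (hgh : Commute g h) (hv0 : v ≠ 0) (hv : v ∈ g.negEigenspace)
    (hw0 : w ≠ 0) (hw : w ∈ h.negEigenspace) (hvw : Disjoint (span ℝ {v}) (span ℝ {w})) :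
    h v = v := by
  have hhv_mem : h v ∈ g.negEigenspace := by
    have hswap : g (h v) = h (g v) := congr($hgh.eq v)
    rw [mem_negEigenspace, hswap, mem_negEigenspace.1 hv, map_neg]
  rw [hg.negEigenspace_eq_span hv0 hv] at hhv_mem
  have h_along_v : h v - v ∈ span ℝ {v} := sub_mem hhv_mem (mem_span_singleton_self v)
  have h_along_w : h v - v ∈ span ℝ {w} := hh.apply_sub_self_mem_span hw0 hw v
  exact sub_eq_zero.1 (disjoint_def.1 hvw _ h_along_v h_along_w)

end IsOrthoReflection

section Cube

variable {ι : Type*} [DecidableEq ι] {s : ι → (V ≃ₗᵢ[ℝ] V)} {v : ι → V}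

lemma commProd_apply_root_of_notMem (hrefl : ∀ i, IsOrthoReflection (s i))
    (hcomm : ∀ i j, Commute (s i) (s j)) (hroot : ∀ i, v i ≠ 0 ∧ v i ∈ (s i).negEigenspace)
    (hindep : LinearIndependent ℝ v) {i : ι} {S : Finset ι} (hi : i ∉ S) :
    commProd hcomm S (v i) = v i := by
  induction S using Finset.induction_on with
  | empty => rfl
  | insert j T hj ih =>
    rw [Finset.mem_insert, not_or] at hi
    have hvij : Disjoint (span ℝ {v i}) (span ℝ {v j}) := by
      simpa using hindep.disjoint_span_image (Set.disjoint_singleton.2 hi.1)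
    rw [commProd_insert hcomm hj, coe_mul, Function.comp_apply, ih hi.2,
      (hrefl i).apply_eq_self_of_commute_s13 (hrefl j) (hcomm i j) (hroot i).1 (hroot i).2
        (hroot j).1 (hroot j).2 hvij]

lemma commProd_apply_root_of_mem (hrefl : ∀ i, IsOrthoReflection (s i))
    (hcomm : ∀ i j, Commute (s i) (s j)) (hroot : ∀ i, v i ≠ 0 ∧ v i ∈ (s i).negEigenspace)
    (hindep : LinearIndependent ℝ v) {i : ι} {S : Finset ι} (hi : i ∈ S) :
    commProd hcomm S (v i) = -v i := by
  rw [← mul_commProd_erase hcomm hi, coe_mul, Function.comp_apply,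
    commProd_apply_root_of_notMem hrefl hcomm hroot hindep (S.notMem_erase i),
    mem_negEigenspace.1 (hroot i).2]

lemma commProd_apply_sub_self_mem_span (hrefl : ∀ i, IsOrthoReflection (s i))
    (hcomm : ∀ i j, Commute (s i) (s j)) (hroot : ∀ i, v i ≠ 0 ∧ v i ∈ (s i).negEigenspace)
    (S : Finset ι) (x : V) : commProd hcomm S x - x ∈ span ℝ (v '' S) := by
  induction S using Finset.induction_on with
  | empty =>
    rw [commProd_empty, coe_one, id_eq, sub_self]
    exact zero_mem _
  | insert j T hj ih =>
    set y := commProd hcomm T x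
    have hsplit : commProd hcomm (insert j T) x - x = (s j y - y) + (y - x) := by
      rw [commProd_insert hcomm hj, coe_mul, Function.comp_apply]; abel
    rw [hsplit, Finset.coe_insert, Set.image_insert_eq, span_insert]
    exact add_mem (mem_sup_left ((hrefl j).apply_sub_self_mem_span (hroot j).1 (hroot j).2 y))
      (mem_sup_right ih)

lemma negEigenspace_commProd (hrefl : ∀ i, IsOrthoReflection (s i))
    (hcomm : ∀ i j, Commute (s i) (s j)) (hroot : ∀ i, v i ≠ 0 ∧ v i ∈ (s i).negEigenspace)
    (hindep : LinearIndependent ℝ v) (S : Finset ι) :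
    (commProd hcomm S).negEigenspace = span ℝ (v '' S) := by
  apply le_antisymm
  · intro x hx
    have hx_eq : x = (-2⁻¹ : ℝ) • (commProd hcomm S x - x) := by
      rw [mem_negEigenspace.1 hx]; module
    rw [hx_eq]
    exact smul_mem _ _ (commProd_apply_sub_self_mem_span hrefl hcomm hroot S x)
  · rw [span_le]
    rintro _ ⟨i, hi, rfl⟩
    exact mem_negEigenspace.2 (commProd_apply_root_of_mem hrefl hcomm hroot hindep hi)

lemma invDegree_commProd (hrefl : ∀ i, IsOrthoReflection (s i))
    (hcomm : ∀ i j, Commute (s i) (s j)) (hroot : ∀ i, v i ≠ 0 ∧ v i ∈ (s i).negEigenspace)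
    (hindep : LinearIndependent ℝ v) (S : Finset ι) :
    invDegree (commProd hcomm S) = S.card := by
  rw [invDegree, ← negEigenspace, negEigenspace_commProd hrefl hcomm hroot hindep,
    Set.image_eq_range]
  exact (finrank_span_eq_card (hindep.comp _ Subtype.val_injective)).trans (Fintype.card_coe S)

end Cube

end Reflections

theorem cube_top_element_unique_max_degree_general
    {V : Type*} [NormedAddCommGroup V] [InnerProductSpace ℝ V]
    (n : ℕ) (s : Fin n → (V ≃ₗᵢ[ℝ] V))
    (hrefl : ∀ i, IsOrthoReflection (s i))
    (hcomm : ∀ i j, Commute (s i) (s j))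
    (v : Fin n → V)
    (hroot : ∀ i, v i ≠ 0 ∧
      v i ∈ Module.End.eigenspace ((s i).toLinearEquiv : V →ₗ[ℝ] V) (-1))
    (hindep : LinearIndependent ℝ v) :
    invDegree (List.ofFn s).prod = n ∧
    ∀ x ∈ Subgroup.closure (Set.range s),
      x ≠ (List.ofFn s).prod → invDegree x < n := by
  have hdeg := invDegree_commProd hrefl hcomm hroot hindep
  rw [List.prod_ofFn_eq_commProd hcomm]
  refine ⟨by rw [hdeg, Finset.card_univ, Fintype.card_fin], ?_⟩
  intro x hx hne
  obtain ⟨S, rfl⟩ := exists_commProd_eq_of_mem_closure hcomm (fun i => (hrefl i).1) hx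
  rw [hdeg]
  simpa using (Finset.card_lt_iff_ne_univ S).2 (by rintro rfl; exact hne rfl)

/-- Let `C` be a "cube": the subgroup generated by pairwise commuting reflections
`s 1, …, s n` whose root lines are linearly independent. Then the product
`s 1 ⋯ s n` has degree `n`, and every other element of `C` has degree `< n`;
in particular the product of the generating reflections is the unique involution
of `C` of maximal degree, independently of the chosen generating set of
commuting reflections. -/
theorem cube_top_element_unique_max_degree
    {V : Type*} [NormedAddCommGroup V] [InnerProductSpace ℝ V] [FiniteDimensional ℝ V]
    (n : ℕ) (s : Fin n → (V ≃ₗᵢ[ℝ] V))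
    (hrefl : ∀ i, IsOrthoReflection (s i))
    (hcomm : ∀ i j, Commute (s i) (s j))
    (v : Fin n → V)
    (hroot : ∀ i, v i ≠ 0 ∧
      v i ∈ Module.End.eigenspace ((s i).toLinearEquiv : V →ₗ[ℝ] V) (-1))
    (hindep : LinearIndependent ℝ v) :
    invDegree (List.ofFn s).prod = n ∧
    ∀ x ∈ Subgroup.closure (Set.range s),
      x ≠ (List.ofFn s).prod → invDegree x < n :=
  cube_top_element_unique_max_degree_general n s hrefl hcomm v hroot hindep
end
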